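/- arXiv:1706.09836 — 7 statements merged into one kernel-verified Lean document; each statement's English description precedes it below -/
import Mathlib

section
/- Let G be a metagroup with center C(G). Then C(G) is a commutative group under the multiplication of G: it contains the neutral element e, is closed under multiplication, the multiplication restricted to C(G) is associative and commutative, and every a ∈ C(G) has a two-sided inverse lying in C(G). -/
/-- A *metagroup*: a set `G` with a binary operation such that left and right
division are uniquely defined, a two-sided neutral element `1` exists, and a
distinguished subset `F` is fixed which is a subgroup of the center of `G`,
together with a map `t₃ : G × G × G → F` measuring nonassociativity:
`(a*b)*c = t₃ a b c * (a*(b*c))`. -/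
class Metagroup (G : Type*) extends Mul G, One G where
  /-- For all `a b` there is a unique `x` with `a * x = b`. -/
  existsUnique_mul_left : ∀ a b : G, ∃! x : G, a * x = b
  /-- For all `a b` there is a unique `y` with `y * a = b`. -/
  existsUnique_mul_right : ∀ a b : G, ∃! y : G, y * a = b
  one_mul : ∀ g : G, 1 * g = g
  mul_one : ∀ g : G, g * 1 = g
  /-- The distinguished subset `F`. -/
  F : Set G
  /-- `F` consists of commuting elements. -/
  F_comm : ∀ a ∈ F, ∀ b : G, a * b = b * a
  /-- `F` consists of left-associating elements. -/
  F_assoc_left : ∀ a ∈ F, ∀ b c : G, (a * b) * c = a * (b * c)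
  /-- `F` consists of middle-associating elements. -/
  F_assoc_mid : ∀ a ∈ F, ∀ b c : G, (b * a) * c = b * (a * c)
  /-- `F` consists of right-associating elements. -/
  F_assoc_right : ∀ a ∈ F, ∀ b c : G, (b * c) * a = b * (c * a)
  /-- `F` contains the neutral element. -/
  one_mem_F : (1 : G) ∈ F
  /-- `F` is closed under multiplication. -/
  mul_mem_F : ∀ a ∈ F, ∀ b ∈ F, a * b ∈ F
  /-- Every element of `F` has a two-sided inverse in `F`. -/
  inv_mem_F : ∀ a ∈ F, ∃ b ∈ F, a * b = 1 ∧ b * a = 1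
  /-- The associator map, with values in `F`. -/
  t₃ : G → G → G → G
  t₃_mem_F : ∀ a b c : G, t₃ a b c ∈ F
  t₃_spec : ∀ a b c : G, (a * b) * c = t₃ a b c * (a * (b * c))

/-- The center `C(G)` of a metagroup: elements commuting with all of `G` and
associating in every position with all pairs from `G`. -/
def Metagroup.center (G : Type*) [Metagroup G] : Set G :=
  {a : G | (∀ b : G, a * b = b * a) ∧
    ∀ b c : G, (a * b) * c = a * (b * c) ∧ (b * a) * c = b * (a * c) ∧
      (b * c) * a = b * (c * a)}

/-- The center of a metagroup is a commutative group under the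
multiplication of `G`: it contains the neutral element, is closed under
multiplication, the multiplication restricted to it is associative and
commutative, and every element of it has a two-sided inverse lying in it. -/
theorem center_of_metagroup_is_commutative_group (G : Type*) [Metagroup G] :
    (1 : G) ∈ Metagroup.center G ∧
    (∀ a ∈ Metagroup.center G, ∀ b ∈ Metagroup.center G,
      a * b ∈ Metagroup.center G) ∧
    (∀ a ∈ Metagroup.center G, ∀ b ∈ Metagroup.center G, ∀ c ∈ Metagroup.center G,
      (a * b) * c = a * (b * c)) ∧
    (∀ a ∈ Metagroup.center G, ∀ b ∈ Metagroup.center G, a * b = b * a) ∧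
    (∀ a ∈ Metagroup.center G, ∃ b ∈ Metagroup.center G, a * b = 1 ∧ b * a = 1) := by

  classical
  have lcancel : ∀ a x y : G, a * x = a * y → x = y := by
    intro a x y h
    obtain ⟨z, hz, hu⟩ := Metagroup.existsUnique_mul_left a (a * y)
    exact (hu x h).trans (hu y rfl).symm
  refine ⟨⟨fun b => by rw [Metagroup.one_mul, Metagroup.mul_one],
    fun b c => by simp only [Metagroup.one_mul, Metagroup.mul_one]; trivial⟩, ?_, ?_, ?_, ?_⟩
  · rintro a ⟨ha1, ha2⟩ b ⟨hb1, hb2⟩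
    constructor
    · intro c
      calc (a * b) * c = a * (b * c) := (ha2 b c).1
        _ = a * (c * b) := by rw [hb1 c]
        _ = (a * c) * b := ((ha2 c b).1).symm
        _ = (c * a) * b := by rw [ha1 c]
        _ = c * (a * b) := (hb2 c a).2.2
    · intro c d
      refine ⟨?_, ?_, ?_⟩
      · calc ((a * b) * c) * d = (a * (b * c)) * d := by rw [(ha2 b c).1]
          _ = a * ((b * c) * d) := (ha2 (b*c) d).1
          _ = a * (b * (c * d)) := by rw [(hb2 c d).1]
          _ = (a * b) * (c * d) := ((ha2 b (c*d)).1).symm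
      · calc (c * (a * b)) * d = ((c * a) * b) * d := by rw [(ha2 c b).2.1]
          _ = (c * a) * (b * d) := (hb2 (c*a) d).2.1
          _ = c * (a * (b * d)) := (ha2 c (b*d)).2.1
          _ = c * ((a * b) * d) := by rw [(ha2 b d).1]
      · calc (c * d) * (a * b) = ((c * d) * a) * b := ((hb2 (c*d) a).2.2).symm
          _ = (c * (d * a)) * b := by rw [(ha2 c d).2.2]
          _ = c * ((d * a) * b) := (hb2 c (d*a)).2.2
          _ = c * (d * (a * b)) := by rw [(ha2 d b).2.1]
  · rintro a ⟨ha1, ha2⟩ b ⟨hb1, hb2⟩ c hc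
    exact (ha2 b c).1
  · rintro a ⟨ha1, ha2⟩ b hb
    exact ha1 b
  · rintro a ⟨ha1, ha2⟩
    obtain ⟨b, hab, _⟩ := Metagroup.existsUnique_mul_left a 1
    have hba : b * a = 1 := by
      have : a * (b * a) = a * 1 := by
        rw [Metagroup.mul_one]
        calc a * (b * a) = (a * b) * a := ((ha2 b a).1).symm
          _ = 1 * a := by rw [hab]
          _ = a := Metagroup.one_mul a
      exact lcancel a _ _ this
    have hbcomm : ∀ g : G, b * g = g * b := by
      intro g
      apply lcancel a
      calc a * (b * g) = (a * b) * g := ((ha2 b g).1).symm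
        _ = g := by rw [hab, Metagroup.one_mul]
        _ = g * 1 := (Metagroup.mul_one g).symm
        _ = g * (a * b) := by rw [hab]
        _ = (g * a) * b := ((ha2 g b).2.1).symm
        _ = (a * g) * b := by rw [ha1 g]
        _ = a * (g * b) := (ha2 g b).1
    refine ⟨b, ⟨hbcomm, ?_⟩, hab, hba⟩
    intro x y
    refine ⟨?_, ?_, ?_⟩
    · apply lcancel a
      calc a * ((b * x) * y) = (a * (b * x)) * y := ((ha2 (b*x) y).1).symm
        _ = ((a * b) * x) * y := by rw [(ha2 b x).1]
        _ = (1 * x) * y := by rw [hab]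
        _ = x * y := by rw [Metagroup.one_mul]
        _ = (a * b) * (x * y) := by rw [hab, Metagroup.one_mul]
        _ = a * (b * (x * y)) := (ha2 b (x*y)).1
    · apply lcancel a
      calc a * ((x * b) * y) = (a * (x * b)) * y := ((ha2 (x*b) y).1).symm
        _ = ((a * x) * b) * y := by rw [(ha2 x b).1]
        _ = ((x * a) * b) * y := by rw [ha1 x]
        _ = (x * (a * b)) * y := by rw [(ha2 x b).2.1]
        _ = (x * 1) * y := by rw [hab]
        _ = x * y := by rw [Metagroup.mul_one]
        _ = x * (1 * y) := by rw [Metagroup.one_mul]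
        _ = x * ((a * b) * y) := by rw [hab]
        _ = x * (a * (b * y)) := by rw [(ha2 b y).1]
        _ = (x * a) * (b * y) := ((ha2 x (b*y)).2.1).symm
        _ = (a * x) * (b * y) := by rw [ha1 x]
        _ = a * (x * (b * y)) := (ha2 x (b*y)).1
    · apply lcancel a
      calc a * ((x * y) * b) = ((x * y) * b) * a := ha1 _
        _ = (x * y) * (b * a) := (ha2 (x*y) b).2.2
        _ = x * y := by rw [hba, Metagroup.mul_one]
        _ = x * (y * (b * a)) := by rw [hba, Metagroup.mul_one]
        _ = x * ((y * b) * a) := by rw [(ha2 y b).2.2]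
        _ = (x * (y * b)) * a := ((ha2 x (y*b)).2.2).symm
        _ = a * (x * (y * b)) := (ha1 _).symm
end

section
/- Let G be a metagroup with distinguished central subgroup F and associator map t₃. Then for every n ≥ 1, all elements a₁,…,aₙ ∈ G and every full binary tree τ with n leaves, there exists t ∈ F such that {a₁,…,aₙ}_τ = t * ((…((a₁*a₂)*a₃)…)*aₙ). Consequently, for any two full binary trees τ and υ with n leaves there exists t ∈ F with {a₁,…,aₙ}_τ = t * {a₁,…,aₙ}_υ. -/
/-- Full binary trees: shapes of fully parenthesized products. The number of
leaves is the number of factors. -/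
inductive BinTree : Type
  | leaf : BinTree
  | node : BinTree → BinTree → BinTree

/-- The number of leaves of a full binary tree. -/
def BinTree.leaves : BinTree → ℕ
  | .leaf => 1
  | .node l r => l.leaves + r.leaves

/-- Auxiliary function: consume the factors of a list according to the shape of
a full binary tree, returning the resulting product together with the unused
factors.  (The junk value `1` is only used when the list is too short.) -/
def BinTree.prodAux {G : Type*} [Mul G] [One G] : BinTree → List G → G × List G
  | .leaf, [] => (1, [])
  | .leaf, a :: rest => (a, rest)
  | .node l r, xs =>
    let p := BinTree.prodAux l xs
    let q := BinTree.prodAux r p.2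
    (p.1 * q.1, q.2)

/-- The `τ`-product `{a₁,…,aₙ}_τ` of the list `[a₁,…,aₙ]` (of length
`τ.leaves`): multiply the factors according to the shape of the full binary
tree `τ`, with leaves labelled from left to right. -/
def BinTree.prod {G : Type*} [Mul G] [One G] (τ : BinTree) (xs : List G) : G :=
  (BinTree.prodAux τ xs).1

/-- The left-normed product `(…((a₁*a₂)*a₃)…)*aₙ` of a list. -/
def List.leftProd {G : Type*} [Mul G] [One G] : List G → G
  | [] => 1
  | a :: rest => rest.foldl (· * ·) a


section Aux
variable {G : Type*} [Metagroup G]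

local notation "F" => Metagroup.F (G := G)

lemma mg_pull (m : List G) : ∀ t ∈ F, ∀ b : G,
    List.foldl (· * ·) (t * b) m = t * List.foldl (· * ·) b m := by
  induction m with
  | nil => intro t ht b; rfl
  | cons c m ih =>
    intro t ht b
    have : (t * b) * c = t * (b * c) := Metagroup.F_assoc_left t ht b c
    simp only [List.foldl_cons, this]
    exact ih t ht (b * c)

lemma mg_P (m : List G) : ∀ a y : G, ∃ t ∈ F,
    List.foldl (· * ·) (a * y) m = t * (a * List.foldl (· * ·) y m) := by
  induction m with
  | nil =>
    intro a y
    exact ⟨1, Metagroup.one_mem_F, (Metagroup.one_mul _).symm⟩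
  | cons c m ih =>
    intro a y
    obtain ⟨t, ht, hteq⟩ := ih a (y * c)
    refine ⟨Metagroup.t₃ a y c * t,
      Metagroup.mul_mem_F _ (Metagroup.t₃_mem_F a y c) _ ht, ?_⟩
    have h1 : (a * y) * c = Metagroup.t₃ a y c * (a * (y * c)) :=
      Metagroup.t₃_spec a y c
    simp only [List.foldl_cons, h1]
    rw [mg_pull m _ (Metagroup.t₃_mem_F a y c), hteq,
      Metagroup.F_assoc_left _ (Metagroup.t₃_mem_F a y c)]

/-- combine leftProd of append -/
lemma mg_append (L1 L2 : List G) (h1 : L1 ≠ []) (h2 : L2 ≠ []) :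
    ∃ t ∈ F, List.leftProd (L1 ++ L2) = t * (L1.leftProd * L2.leftProd) := by
  obtain ⟨a1, rest1, rfl⟩ := List.exists_cons_of_ne_nil h1
  obtain ⟨x, m, rfl⟩ := List.exists_cons_of_ne_nil h2
  obtain ⟨t, ht, hteq⟩ := mg_P m (List.leftProd (a1 :: rest1)) x
  refine ⟨t, ht, ?_⟩
  have : List.leftProd ((a1 :: rest1) ++ (x :: m))
      = List.foldl (· * ·) (List.leftProd (a1 :: rest1) * x) m := by
    simp [List.leftProd, List.foldl_append]
  rw [this, hteq]
  rfl

lemma mg_leaves_pos (τ : BinTree) : 1 ≤ τ.leaves := by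
  induction τ with
  | leaf => exact le_refl 1
  | node l r ihl ihr => simp [BinTree.leaves]; omega

lemma mg_keyA (τ : BinTree) : ∀ xs : List G, τ.leaves ≤ xs.length →
    (BinTree.prodAux τ xs).2 = xs.drop τ.leaves ∧
    ∃ t ∈ F, t * (BinTree.prodAux τ xs).1 = (xs.take τ.leaves).leftProd := by
  induction τ with
  | leaf =>
    intro xs hxs
    match xs with
    | a :: rest =>
      refine ⟨rfl, 1, Metagroup.one_mem_F, ?_⟩
      simp [BinTree.prodAux, BinTree.leaves, List.leftProd, Metagroup.one_mul]
  | node l r ihl ihr =>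
    intro xs hxs
    simp only [BinTree.leaves] at hxs
    have hl : l.leaves ≤ xs.length := by omega
    obtain ⟨hdl, tl, htl, htleq⟩ := ihl xs hl
    have hr : r.leaves ≤ ((BinTree.prodAux l xs).2).length := by
      rw [hdl, List.length_drop]; omega
    obtain ⟨hdr, tr, htr, htreq⟩ := ihr _ hr
    constructor
    · show (BinTree.prodAux r (BinTree.prodAux l xs).2).2 = _
      rw [hdr, hdl, List.drop_drop, BinTree.leaves, Nat.add_comm]
    · set P := (BinTree.prodAux l xs).1
      set Q := (BinTree.prodAux r (BinTree.prodAux l xs).2).1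
      have hlp := mg_leaves_pos l
      have hrp := mg_leaves_pos r
      have hL1 : xs.take l.leaves ≠ [] := by
        have hlen1 : (xs.take l.leaves).length = l.leaves := by
          rw [List.length_take]; omega
        intro h
        rw [h] at hlen1; simp at hlen1; omega
      have hL2 : ((BinTree.prodAux l xs).2).take r.leaves ≠ [] := by
        have hlen2 : (((BinTree.prodAux l xs).2).take r.leaves).length = r.leaves := by
          rw [List.length_take, hdl, List.length_drop]; omega
        intro h
        rw [h] at hlen2; simp at hlen2; omega
      obtain ⟨s, hs, hseq⟩ := mg_append (xs.take l.leaves)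
        (((BinTree.prodAux l xs).2).take r.leaves) hL1 hL2
      refine ⟨s * (tl * tr), Metagroup.mul_mem_F _ hs _
        (Metagroup.mul_mem_F _ htl _ htr), ?_⟩
      show (s * (tl * tr)) * (P * Q) = _
      have htltr : tl * tr ∈ F := Metagroup.mul_mem_F _ htl _ htr
      have e1 : (s * (tl * tr)) * (P * Q) = s * ((tl * tr) * (P * Q)) :=
        Metagroup.F_assoc_left _ hs _ _
      have e2 : (tl * tr) * (P * Q) = tl * (tr * (P * Q)) :=
        Metagroup.F_assoc_left _ htl _ _
      have e3 : tr * (P * Q) = (tr * P) * Q := (Metagroup.F_assoc_left _ htr _ _).symm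
      have e4 : tr * P = P * tr := Metagroup.F_comm _ htr _
      have e5 : (P * tr) * Q = P * (tr * Q) := Metagroup.F_assoc_mid _ htr _ _
      have e6 : tl * (P * (tr * Q)) = (tl * P) * (tr * Q) :=
        (Metagroup.F_assoc_left _ htl _ _).symm
      rw [e1, e2, e3, e4, e5, e6, htleq, htreq, ← hseq,
        BinTree.leaves, List.take_add, hdl]

lemma mg_inv_extract {s P L : G} (hs : s ∈ F) (h : s * P = L) :
    ∃ t ∈ F, P = t * L := by
  obtain ⟨b, hb, hbs1, hbs2⟩ := Metagroup.inv_mem_F s hs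
  refine ⟨b, hb, ?_⟩
  rw [← h, ← Metagroup.F_assoc_left b hb s P, hbs2, Metagroup.one_mul]

end Aux

/-- In a metagroup, every parenthesized product of
`a₁,…,aₙ` differs from the left-normed product `(…((a₁*a₂)*a₃)…)*aₙ` by a
factor from the distinguished central subgroup `F`; consequently any two
parenthesized products of `a₁,…,aₙ` (in the same order) differ by a factor
from `F`. -/
theorem metagroup_tree_prod_eq_smul_leftProd {G : Type*} [Metagroup G]
    (n : ℕ) (hn : 1 ≤ n) (as : List G) (hlen : as.length = n) :
    (∀ τ : BinTree, τ.leaves = n →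
      ∃ t ∈ Metagroup.F (G := G), BinTree.prod τ as = t * List.leftProd as) ∧
    (∀ τ υ : BinTree, τ.leaves = n → υ.leaves = n →
      ∃ t ∈ Metagroup.F (G := G), BinTree.prod τ as = t * BinTree.prod υ as) := by
  have key : ∀ τ : BinTree, τ.leaves = n →
      ∃ t ∈ Metagroup.F (G := G), BinTree.prod τ as = t * List.leftProd as := by
    intro τ hτ
    obtain ⟨_, s, hs, hseq⟩ := mg_keyA τ as (by omega)
    rw [hτ, ← hlen, List.take_length] at hseq
    exact mg_inv_extract hs hseq
  refine ⟨key, fun τ υ hτ hυ => ?_⟩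
  obtain ⟨t, ht, hteq⟩ := key τ hτ
  obtain ⟨u, hu, hueq⟩ := key υ hυ
  obtain ⟨v, hv, hv1, hv2⟩ := Metagroup.inv_mem_F u hu
  refine ⟨t * v, Metagroup.mul_mem_F _ ht _ hv, ?_⟩
  rw [hteq, hueq, Metagroup.F_assoc_left _ ht,
    ← Metagroup.F_assoc_left v hv u _, hv2, Metagroup.one_mul]
end

section
/- Let G be a central metagroup with distinguished central subgroup F. Then for every n ≥ 1, all elements a₁,…,aₙ ∈ G, every permutation v of {1,…,n}, and any two full binary trees τ and υ with n leaves, there exists t ∈ F such that {a₁,…,aₙ}_τ = t * {a_{v(1)},…,a_{v(n)}}_υ. -/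
/-- A *central metagroup*: a metagroup together with a map `t₂ : G × G → F`
measuring noncommutativity: `a * b = t₂ a b * (b * a)`. -/
class CentralMetagroup (G : Type*) extends Metagroup G where
  /-- The commutator map, with values in `F`. -/
  t₂ : G → G → G
  t₂_mem_F : ∀ a b : G, t₂ a b ∈ F
  t₂_spec : ∀ a b : G, a * b = t₂ a b * (b * a)

namespace MetagroupProof

variable {G : Type*}

/-- The relation "differ by a factor from `F`". -/
def R [Metagroup G] (a b : G) : Prop := ∃ t ∈ Metagroup.F (G := G), a = t * b

section Meta
variable [Metagroup G]

open Metagroup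

theorem R.refl (a : G) : R a a := ⟨1, one_mem_F, (Metagroup.one_mul a).symm⟩

theorem R.symm {a b : G} (h : R a b) : R b a := by
  obtain ⟨t, ht, rfl⟩ := h
  obtain ⟨s, hs, hst, hts⟩ := inv_mem_F t ht
  exact ⟨s, hs, by rw [← F_assoc_left s hs t b, hts, Metagroup.one_mul]⟩

theorem R.trans {a b c : G} (h₁ : R a b) (h₂ : R b c) : R a c := by
  obtain ⟨t, ht, rfl⟩ := h₁
  obtain ⟨s, hs, rfl⟩ := h₂
  exact ⟨t * s, mul_mem_F t ht s hs, (F_assoc_left t ht s c).symm⟩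

theorem R.mul {a a' b b' : G} (h₁ : R a a') (h₂ : R b b') : R (a * b) (a' * b') := by
  obtain ⟨t, ht, rfl⟩ := h₁
  obtain ⟨s, hs, rfl⟩ := h₂
  refine ⟨t * s, mul_mem_F t ht s hs, ?_⟩
  rw [F_assoc_left t ht a' (s * b'), ← F_assoc_mid s hs a' b', ← F_comm s hs a',
    F_assoc_left s hs a' b', ← F_assoc_left t ht s (a' * b')]

end Meta

variable [CentralMetagroup G]

open Metagroup

instance rSetoid (G : Type*) [Metagroup G] : Setoid G :=
  ⟨R, fun _ => R.refl _, R.symm, R.trans⟩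

/-- The quotient of `G` by `R`. -/
def Q (G : Type*) [Metagroup G] : Type _ := Quotient (rSetoid G)

/-- The quotient map. -/
def π (a : G) : Q G := Quotient.mk _ a

instance : CommMonoid (Q G) where
  mul := Quotient.map₂ (· * ·) (fun _ _ h₁ _ _ h₂ => h₁.mul h₂)
  one := π (1 : G)
  mul_assoc := by
    rintro ⟨a⟩ ⟨b⟩ ⟨c⟩
    exact Quotient.sound ⟨t₃ a b c, t₃_mem_F a b c, t₃_spec a b c⟩
  one_mul := by
    rintro ⟨a⟩
    exact Quotient.sound (show R (1 * a) a by rw [Metagroup.one_mul]; exact R.refl a)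
  mul_one := by
    rintro ⟨a⟩
    exact Quotient.sound (show R (a * 1) a by rw [Metagroup.mul_one]; exact R.refl a)
  mul_comm := by
    rintro ⟨a⟩ ⟨b⟩
    exact Quotient.sound ⟨CentralMetagroup.t₂ a b, CentralMetagroup.t₂_mem_F a b,
      CentralMetagroup.t₂_spec a b⟩

theorem π_mul (a b : G) : π (a * b) = π a * π b := rfl

theorem π_one : π (1 : G) = 1 := rfl

theorem prodAux_spec (τ : BinTree) (xs : List G) :
    π (τ.prodAux xs).1 * ((τ.prodAux xs).2.map π).prod = (xs.map π).prod := by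
  induction τ generalizing xs with
  | leaf =>
    cases xs with
    | nil => simp [BinTree.prodAux, π_one]
    | cons a rest => simp [BinTree.prodAux]
  | node l r hl hr =>
    simp only [BinTree.prodAux, π_mul, mul_assoc]
    rw [hr, hl]

theorem prodAux_snd (τ : BinTree) (xs : List G) (h : τ.leaves ≤ xs.length) :
    (τ.prodAux xs).2 = xs.drop τ.leaves := by
  induction τ generalizing xs with
  | leaf =>
    cases xs with
    | nil => simp [BinTree.leaves] at h
    | cons a rest => simp [BinTree.prodAux, BinTree.leaves]
  | node l r hl hr =>
    simp only [BinTree.prodAux, BinTree.leaves] at h ⊢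
    rw [hl xs (le_trans (Nat.le_add_right _ _) h),
      hr _ (by simp [List.length_drop]; omega), List.drop_drop, Nat.add_comm]

theorem π_prod (τ : BinTree) (xs : List G) (h : τ.leaves = xs.length) :
    π (τ.prod xs) = (xs.map π).prod := by
  have := prodAux_spec τ xs
  rw [prodAux_snd τ xs h.le, h, List.drop_length] at this
  simpa [BinTree.prod] using this

end MetagroupProof

/-- In a central metagroup, for all `a₁,…,aₙ`, every
permutation `v` of `{1,…,n}` and any two full binary trees `τ, υ` with `n`
leaves, the `τ`-product of `a₁,…,aₙ` differs from the `υ`-product of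
`a_{v(1)},…,a_{v(n)}` by a factor from the distinguished central subgroup
`F`. -/
theorem central_metagroup_tree_prod_perm {G : Type*} [CentralMetagroup G]
    (n : ℕ) (hn : 1 ≤ n) (a : Fin n → G) (v : Equiv.Perm (Fin n))
    (τ υ : BinTree) (hτ : τ.leaves = n) (hυ : υ.leaves = n) :
    ∃ t ∈ Metagroup.F (G := G),
      BinTree.prod τ (List.ofFn a) = t * BinTree.prod υ (List.ofFn (fun i => a (v i))) := by
  open MetagroupProof in
  have h1 : π (BinTree.prod τ (List.ofFn a)) = ∏ i, π (a i) := by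
    rw [π_prod τ _ (by simpa using hτ)]
    simp [List.map_ofFn, List.prod_ofFn, Function.comp]
  have h2 : π (BinTree.prod υ (List.ofFn fun i => a (v i))) = ∏ i, π (a (v i)) := by
    rw [π_prod υ _ (by simpa using hυ)]
    simp [List.map_ofFn, List.prod_ofFn, Function.comp]
  have h3 : π (BinTree.prod τ (List.ofFn a))
      = π (BinTree.prod υ (List.ofFn fun i => a (v i))) := by
    rw [h1, h2, Equiv.prod_comp v (fun i => π (a i))]
  exact Quotient.exact h3
end

section
/- Let G be a metagroup with associator map t₃. Then t₃ satisfies the pentagon (cocycle) identity: for all a, b, c, d ∈ G, t₃(a,b,c) * (t₃(a, b*c, d) * t₃(b,c,d)) = t₃(a*b, c, d) * t₃(a, b, c*d). -/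
/-- The associator map `t₃` of a metagroup satisfies the
pentagon (cocycle) identity. -/
theorem metagroup_t₃_pentagon {G : Type*} [Metagroup G] (a b c d : G) :
    Metagroup.t₃ a b c * (Metagroup.t₃ a (b * c) d * Metagroup.t₃ b c d) =
      Metagroup.t₃ (a * b) c d * Metagroup.t₃ a b (c * d) := by
  classical
  open Metagroup in
  -- helper: pull an F-element out: a * (f * x) = f * (a * x)
  have hpull : ∀ f ∈ Metagroup.F (G := G), ∀ a x : G, a * (f * x) = f * (a * x) := by
    intro f hf a x
    rw [← Metagroup.F_assoc_mid f hf a x, ← Metagroup.F_comm f hf a,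
      Metagroup.F_assoc_left f hf a x]
  have h1 := Metagroup.t₃_mem_F a b c
  have h2 := Metagroup.t₃_mem_F a (b * c) d
  have h3 := Metagroup.t₃_mem_F b c d
  have h4 := Metagroup.t₃_mem_F (a * b) c d
  have h5 := Metagroup.t₃_mem_F a b (c * d)
  have key : (Metagroup.t₃ a b c * (Metagroup.t₃ a (b * c) d * Metagroup.t₃ b c d)) * (a * (b * (c * d)))
      = (Metagroup.t₃ (a * b) c d * Metagroup.t₃ a b (c * d)) * (a * (b * (c * d))) := by
    have lhs : ((a * b) * c) * d
        = (Metagroup.t₃ a b c * (Metagroup.t₃ a (b * c) d * Metagroup.t₃ b c d)) * (a * (b * (c * d))) := by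
      rw [Metagroup.t₃_spec a b c, Metagroup.F_assoc_left _ h1,
        Metagroup.t₃_spec a (b * c) d, Metagroup.t₃_spec b c d,
        hpull _ h3 a (b * (c * d)),
        Metagroup.F_assoc_left _ h1, Metagroup.F_assoc_left _ h2]
    have rhs : ((a * b) * c) * d
        = (Metagroup.t₃ (a * b) c d * Metagroup.t₃ a b (c * d)) * (a * (b * (c * d))) := by
      rw [Metagroup.t₃_spec (a * b) c d, Metagroup.t₃_spec a b (c * d),
        Metagroup.F_assoc_left _ h4]
    rw [← lhs, rhs]
  exact (Metagroup.existsUnique_mul_right (a * (b * (c * d)))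
    ((Metagroup.t₃ (a * b) c d * Metagroup.t₃ a b (c * d)) * (a * (b * (c * d))))).unique key rfl
end

section
/- Let G be a metagroup with distinguished central subgroup F and associator map t₃, T a commutative ring, and ι : F → Tˣ an injective group homomorphism. Let K₂, K₁, K₀ be the free T-modules on G⁴, G³, G² respectively, and let K̄₀ be the quotient of K₀ by the T-submodule spanned by all elements (t*x₀, x₁) − ι(t)•(x₀,x₁) and (x₀, t*x₁) − ι(t)•(x₀,x₁) with t ∈ F, x₀,x₁ ∈ G, with quotient map q : K₀ → K̄₀. Define T-linear maps on basis elements by ∂₂(x₀,x₁,x₂,x₃) = (x₀*x₁, x₂, x₃) − ι(t₃(x₀,x₁,x₂))•(x₀, x₁*x₂, x₃) + ι(t₃(x₀*x₁, x₂, x₃))•(x₀, x₁, x₂*x₃) and ∂₁(x₀,x₁,x₂) = (x₀*x₁, x₂) − ι(t₃(x₀,x₁,x₂))•(x₀, x₁*x₂). Then q ∘ ∂₁ ∘ ∂₂ = 0. -/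
variable {G : Type*} [Metagroup G] (T : Type*) [CommRing T]
  (ι : {g : G // g ∈ Metagroup.F (G := G)} → Tˣ)

/-- The scalar `ι(t₃(a,b,c)) ∈ T` associated with the associator of a
metagroup via the group homomorphism `ι : F → Tˣ`. -/
noncomputable def iotaT₃ (a b c : G) : T :=
  ((ι ⟨Metagroup.t₃ a b c, Metagroup.t₃_mem_F a b c⟩ : Tˣ) : T)

/-- The boundary map `∂₁` on the free `T`-module `K₁` on `G×G×G`, defined on
basis elements by `∂₁(x₀,x₁,x₂) = (x₀*x₁, x₂) - ι(t₃(x₀,x₁,x₂))•(x₀, x₁*x₂)`. -/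
noncomputable def del₁ : ((G × G × G) →₀ T) →ₗ[T] ((G × G) →₀ T) :=
  Finsupp.lift _ T _ fun x =>
    Finsupp.single (x.1 * x.2.1, x.2.2) 1
      - iotaT₃ T ι x.1 x.2.1 x.2.2 • Finsupp.single (x.1, x.2.1 * x.2.2) 1

/-- The boundary map `∂₂` on the free `T`-module `K₂` on `G⁴`, defined on basis
elements by `∂₂(x₀,x₁,x₂,x₃) = (x₀*x₁, x₂, x₃) - ι(t₃(x₀,x₁,x₂))•(x₀, x₁*x₂, x₃)
+ ι(t₃(x₀*x₁,x₂,x₃))•(x₀, x₁, x₂*x₃)`. -/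
noncomputable def del₂ : ((G × G × G × G) →₀ T) →ₗ[T] ((G × G × G) →₀ T) :=
  Finsupp.lift _ T _ fun x =>
    Finsupp.single (x.1 * x.2.1, x.2.2.1, x.2.2.2) 1
      - iotaT₃ T ι x.1 x.2.1 x.2.2.1 • Finsupp.single (x.1, x.2.1 * x.2.2.1, x.2.2.2) 1
      + iotaT₃ T ι (x.1 * x.2.1) x.2.2.1 x.2.2.2 •
          Finsupp.single (x.1, x.2.1, x.2.2.1 * x.2.2.2) 1

/-- The `T`-submodule of the free `T`-module `K₀` on `G×G` spanned by all
elements `(t*x₀, x₁) - ι(t)•(x₀,x₁)` and `(x₀, t*x₁) - ι(t)•(x₀,x₁)` with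
`t ∈ F` and `x₀, x₁ ∈ G`. -/
noncomputable def relSubmodule : Submodule T ((G × G) →₀ T) :=
  Submodule.span T
    {z : (G × G) →₀ T |
      ∃ t : {g : G // g ∈ Metagroup.F (G := G)}, ∃ x₀ x₁ : G,
        z = Finsupp.single (t.1 * x₀, x₁) 1 - ((ι t : Tˣ) : T) • Finsupp.single (x₀, x₁) 1 ∨
        z = Finsupp.single (x₀, t.1 * x₁) 1 - ((ι t : Tˣ) : T) • Finsupp.single (x₀, x₁) 1}

section MetagroupAux

variable {G : Type*} [Metagroup G]

lemma mg_cancel_right {x y w : G} (h : x * w = y * w) : x = y :=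
  (Metagroup.existsUnique_mul_right w (y * w)).unique h rfl

lemma mg_central_shift {t : G} (ht : t ∈ Metagroup.F (G := G)) (a x : G) :
    a * (t * x) = t * (a * x) := by
  rw [← Metagroup.F_assoc_mid t ht a x, ← Metagroup.F_comm t ht a,
    Metagroup.F_assoc_left t ht]

lemma mg_pentagon (a b c d : G) :
    Metagroup.t₃ (a * b) c d * Metagroup.t₃ a b (c * d)
      = Metagroup.t₃ a b c * (Metagroup.t₃ a (b * c) d * Metagroup.t₃ b c d) := by
  have h1 : ((a * b) * c) * d
      = (Metagroup.t₃ (a * b) c d * Metagroup.t₃ a b (c * d)) * (a * (b * (c * d))) := by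
    rw [Metagroup.t₃_spec (a * b) c d, Metagroup.t₃_spec a b (c * d),
      Metagroup.F_assoc_left _ (Metagroup.t₃_mem_F (a * b) c d)]
  have h2 : ((a * b) * c) * d
      = (Metagroup.t₃ a b c * (Metagroup.t₃ a (b * c) d * Metagroup.t₃ b c d))
          * (a * (b * (c * d))) := by
    rw [Metagroup.t₃_spec a b c,
      Metagroup.F_assoc_left _ (Metagroup.t₃_mem_F a b c),
      Metagroup.t₃_spec a (b * c) d, Metagroup.t₃_spec b c d,
      mg_central_shift (Metagroup.t₃_mem_F b c d) a,
      ← Metagroup.F_assoc_left _ (Metagroup.t₃_mem_F a (b * c) d),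
      ← Metagroup.F_assoc_left _ (Metagroup.t₃_mem_F a b c)]
  exact mg_cancel_right (h1.symm.trans h2)

end MetagroupAux

/-- Let `G` be a metagroup, `T` a commutative ring and
`ι : F → Tˣ` an injective group homomorphism.  Let `q : K₀ → K̄₀` be the
quotient map of the free `T`-module on `G×G` by the submodule spanned by the
elements `(t*x₀, x₁) - ι(t)•(x₀,x₁)` and `(x₀, t*x₁) - ι(t)•(x₀,x₁)`
(`t ∈ F`).  Then `q ∘ ∂₁ ∘ ∂₂ = 0`. -/
theorem metagroup_resolution_boundary_squared_zero
    (hι_inj : Function.Injective ι)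
    (hι_mul : ∀ a b : {g : G // g ∈ Metagroup.F (G := G)},
      ι ⟨a.1 * b.1, Metagroup.mul_mem_F a.1 a.2 b.1 b.2⟩ = ι a * ι b) :
    ((relSubmodule T ι).mkQ.comp ((del₁ T ι).comp (del₂ T ι))) = 0 := by
  have del₁_single : ∀ (x : G × G × G) (r : T), del₁ T ι (Finsupp.single x r)
      = r • (Finsupp.single (x.1 * x.2.1, x.2.2) 1
          - iotaT₃ T ι x.1 x.2.1 x.2.2 • Finsupp.single (x.1, x.2.1 * x.2.2) 1) := by
    intro x r
    simp [del₁, Finsupp.lift_apply, Finsupp.sum_single_index]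
  have del₂_single : ∀ (x : G × G × G × G) (r : T), del₂ T ι (Finsupp.single x r)
      = r • (Finsupp.single (x.1 * x.2.1, x.2.2.1, x.2.2.2) 1
          - iotaT₃ T ι x.1 x.2.1 x.2.2.1 • Finsupp.single (x.1, x.2.1 * x.2.2.1, x.2.2.2) 1
          + iotaT₃ T ι (x.1 * x.2.1) x.2.2.1 x.2.2.2 •
              Finsupp.single (x.1, x.2.1, x.2.2.1 * x.2.2.2) 1) := by
    intro x r
    simp [del₂, Finsupp.lift_apply, Finsupp.sum_single_index]
  apply Finsupp.lhom_ext
  rintro ⟨a, b, c, d⟩ r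
  -- scalar pentagon identity
  have hpent : iotaT₃ T ι (a * b) c d * iotaT₃ T ι a b (c * d)
      = iotaT₃ T ι a b c * (iotaT₃ T ι a (b * c) d * iotaT₃ T ι b c d) := by
    have e1 : (ι ⟨Metagroup.t₃ (a * b) c d, Metagroup.t₃_mem_F _ _ _⟩)
          * (ι ⟨Metagroup.t₃ a b (c * d), Metagroup.t₃_mem_F _ _ _⟩)
        = (ι ⟨Metagroup.t₃ a b c, Metagroup.t₃_mem_F _ _ _⟩)
          * ((ι ⟨Metagroup.t₃ a (b * c) d, Metagroup.t₃_mem_F _ _ _⟩)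
            * (ι ⟨Metagroup.t₃ b c d, Metagroup.t₃_mem_F _ _ _⟩)) := by
      rw [← hι_mul, ← hι_mul, ← hι_mul]
      congr 1
      exact Subtype.ext (mg_pentagon a b c d)
    have := congrArg (Units.val) e1
    simpa [iotaT₃, Units.val_mul] using this
  -- membership of the image of the basis element
  have hmem : del₁ T ι (del₂ T ι (Finsupp.single (a, b, c, d) (1 : T)))
      ∈ relSubmodule T ι := by
    have g1mem : (Finsupp.single (Metagroup.t₃ a b c * (a * (b * c)), d) (1 : T)
        - iotaT₃ T ι a b c • Finsupp.single (a * (b * c), d) 1) ∈ relSubmodule T ι :=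
      Submodule.subset_span ⟨⟨Metagroup.t₃ a b c, Metagroup.t₃_mem_F a b c⟩,
        a * (b * c), d, Or.inl rfl⟩
    have g2mem : (Finsupp.single (a, Metagroup.t₃ b c d * (b * (c * d))) (1 : T)
        - iotaT₃ T ι b c d • Finsupp.single (a, b * (c * d)) 1) ∈ relSubmodule T ι :=
      Submodule.subset_span ⟨⟨Metagroup.t₃ b c d, Metagroup.t₃_mem_F b c d⟩,
        a, b * (c * d), Or.inr rfl⟩
    have hE : del₁ T ι (del₂ T ι (Finsupp.single (a, b, c, d) (1 : T)))
        = (Finsupp.single (Metagroup.t₃ a b c * (a * (b * c)), d) (1 : T)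
            - iotaT₃ T ι a b c • Finsupp.single (a * (b * c), d) 1)
          + (iotaT₃ T ι a b c * iotaT₃ T ι a (b * c) d) •
            (Finsupp.single (a, Metagroup.t₃ b c d * (b * (c * d))) (1 : T)
              - iotaT₃ T ι b c d • Finsupp.single (a, b * (c * d)) 1) := by
      rw [del₂_single, one_smul, map_add, map_sub, map_smul, map_smul,
        del₁_single, del₁_single, del₁_single]
      simp only [one_smul]
      rw [← Metagroup.t₃_spec a b c, ← Metagroup.t₃_spec b c d]
      match_scalars <;>
        first
          | ring1
          | linear_combination hpent
          | linear_combination -hpent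
          | linear_combination 2 * hpent
          | linear_combination -2 * hpent
    rw [hE]
    exact Submodule.add_mem _ g1mem (Submodule.smul_mem _ _ g2mem)
  have hsingle : (Finsupp.single (a, b, c, d) r : (G × G × G × G) →₀ T)
      = r • Finsupp.single (a, b, c, d) (1 : T) := by
    rw [Finsupp.smul_single, smul_eq_mul, mul_one]
  simp only [LinearMap.comp_apply, LinearMap.zero_apply, hsingle, map_smul]
  have hz : ((relSubmodule T ι).mkQ) (del₁ T ι (del₂ T ι (Finsupp.single (a, b, c, d) (1 : T))))
      = 0 := (Submodule.Quotient.mk_eq_zero _).2 hmem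
  rw [hz, smul_zero]
end

section
/- Let G be a metagroup with distinguished central subgroup F, neutral element e and associator map t₃, T a commutative ring, and ι : F → Tˣ an injective group homomorphism. Let K₂, K₁, K₀ be the free T-modules on G⁴, G³, G². Define T-linear maps on basis elements: s₁ : K₁ → K₂ by s₁(x₀,x₁,x₂) = (e, x₀, x₁, x₂); s₀ : K₀ → K₁ by s₀(x₀,x₁) = (e, x₀, x₁); ∂₂ : K₂ → K₁ by ∂₂(x₀,x₁,x₂,x₃) = (x₀*x₁, x₂, x₃) − ι(t₃(x₀,x₁,x₂))•(x₀, x₁*x₂, x₃) + ι(t₃(x₀*x₁, x₂, x₃))•(x₀, x₁, x₂*x₃); and ∂₁ : K₁ → K₀ by ∂₁(x₀,x₁,x₂) = (x₀*x₁, x₂) − ι(t₃(x₀,x₁,x₂))•(x₀, x₁*x₂). Then the homotopy identity ∂₂ ∘ s₁ + s₀ ∘ ∂₁ = id holds on K₁. -/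
variable {G : Type*} [Metagroup G] (T : Type*) [CommRing T]
  (ι : {g : G // g ∈ Metagroup.F (G := G)} → Tˣ)

/-- The homotopy map `s₁ : K₁ → K₂`, `s₁(x₀,x₁,x₂) = (e,x₀,x₁,x₂)` on basis
elements. -/
noncomputable def homotopyS₁ (G : Type*) [Metagroup G] (T : Type*) [CommRing T] :
    ((G × G × G) →₀ T) →ₗ[T] ((G × G × G × G) →₀ T) :=
  Finsupp.lift _ T _ fun x => Finsupp.single ((1 : G), x.1, x.2.1, x.2.2) 1

/-- The homotopy map `s₀ : K₀ → K₁`, `s₀(x₀,x₁) = (e,x₀,x₁)` on basis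
elements. -/
noncomputable def homotopyS₀ (G : Type*) [Metagroup G] (T : Type*) [CommRing T] :
    ((G × G) →₀ T) →ₗ[T] ((G × G × G) →₀ T) :=
  Finsupp.lift _ T _ fun x => Finsupp.single ((1 : G), x.1, x.2) 1

lemma Metagroup.t₃_one_left (a b : G) : Metagroup.t₃ (1 : G) a b = 1 := by
  have h := Metagroup.t₃_spec (1 : G) a b
  rw [Metagroup.one_mul, Metagroup.one_mul] at h
  have hu := Metagroup.existsUnique_mul_right (a * b) (a * b)
  exact hu.unique h.symm (Metagroup.one_mul _)

lemma iota_one (hι_mul : ∀ a b : {g : G // g ∈ Metagroup.F (G := G)},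
      ι ⟨a.1 * b.1, Metagroup.mul_mem_F a.1 a.2 b.1 b.2⟩ = ι a * ι b) :
    ι ⟨(1 : G), Metagroup.one_mem_F⟩ = 1 := by
  have h := hι_mul ⟨(1 : G), Metagroup.one_mem_F⟩ ⟨(1 : G), Metagroup.one_mem_F⟩
  have : (⟨(1 : G) * 1, Metagroup.mul_mem_F _ Metagroup.one_mem_F _ Metagroup.one_mem_F⟩ :
      {g : G // g ∈ Metagroup.F (G := G)}) = ⟨(1 : G), Metagroup.one_mem_F⟩ := by
    simp [Metagroup.mul_one]
  rw [this] at h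
  exact left_eq_mul.mp h

lemma iotaT₃_one_left (hι_mul : ∀ a b : {g : G // g ∈ Metagroup.F (G := G)},
      ι ⟨a.1 * b.1, Metagroup.mul_mem_F a.1 a.2 b.1 b.2⟩ = ι a * ι b)
    (a b : G) : iotaT₃ T ι (1 : G) a b = 1 := by
  unfold iotaT₃
  have : (⟨Metagroup.t₃ (1 : G) a b, Metagroup.t₃_mem_F _ _ _⟩ :
      {g : G // g ∈ Metagroup.F (G := G)}) = ⟨(1 : G), Metagroup.one_mem_F⟩ := by
    simp [Metagroup.t₃_one_left]
  rw [this, iota_one T ι hι_mul]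
  rfl

lemma lift_single' {X M : Type*} [AddCommMonoid M] [Module T M] (f : X → M) (a : X) (b : T) :
    Finsupp.lift M T X f (Finsupp.single a b) = b • f a := by
  rw [Finsupp.lift_apply]
  exact Finsupp.sum_single_index (zero_smul _ _)

/-- Let `G` be a metagroup, `T` a commutative ring and
`ι : F → Tˣ` an injective group homomorphism.  Then the homotopy identity
`∂₂ ∘ s₁ + s₀ ∘ ∂₁ = id` holds on the free `T`-module `K₁` on `G×G×G`. -/
theorem metagroup_resolution_homotopy_identity
    (hι_inj : Function.Injective ι)
    (hι_mul : ∀ a b : {g : G // g ∈ Metagroup.F (G := G)},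
      ι ⟨a.1 * b.1, Metagroup.mul_mem_F a.1 a.2 b.1 b.2⟩ = ι a * ι b) :
    (del₂ T ι).comp (homotopyS₁ G T) + (homotopyS₀ G T).comp (del₁ T ι) =
      LinearMap.id := by
  apply Finsupp.lhom_ext
  intro x b
  obtain ⟨a, c, d⟩ := x
  simp only [LinearMap.add_apply, LinearMap.comp_apply, LinearMap.id_apply,
    homotopyS₁, homotopyS₀, del₁, del₂, lift_single', map_sub, map_add, map_smul,
    smul_sub, smul_add, smul_smul, Metagroup.one_mul,
    iotaT₃_one_left T ι hι_mul, one_smul, one_mul, mul_one, Finsupp.smul_single, smul_eq_mul]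
  abel
end

section
/- Let G be a metagroup with distinguished central subgroup F and associator map t₃, T a commutative ring, ι : F → Tˣ an injective group homomorphism, and A = T[G] the metagroup algebra, with [g] ∈ A denoting the image of g ∈ G. Let c : G → T be any function satisfying c(t*g) = c(g) for all t ∈ F and g ∈ G, define h : G → A by h(g) = c(g)•[g], and define the coboundary f : G×G → A by f(x,y) = [x]*h(y) − h(x*y) + h(x)*[y]. Then f satisfies the twisted 2-cocycle identity: for all x₁, x₂, x₃ ∈ G, ι(t₃(x₁,x₂,x₃))•([x₁]*f(x₂,x₃)) − f(x₁*x₂, x₃) + ι(t₃(x₁,x₂,x₃))•f(x₁, x₂*x₃) − f(x₁,x₂)*[x₃] = 0. -/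
instance (priority := 100) Metagroup.toMulOneClass (G : Type*) [Metagroup G] :
    MulOneClass G where
  one_mul := Metagroup.one_mul
  mul_one := Metagroup.mul_one

variable {G : Type*} [Metagroup G] (T : Type*) [CommRing T]
  (ι : {g : G // g ∈ Metagroup.F (G := G)} → Tˣ)

/-- The set of relators `(t*g) - ι(t)•g` in the free `T`-module on `G`
(realized as `MonoidAlgebra T G`, whose multiplication is the `T`-bilinear
extension of the multiplication of `G`). -/
noncomputable def relatorSet : Set (MonoidAlgebra T G) :=
  {z | ∃ t : {g : G // g ∈ Metagroup.F (G := G)}, ∃ g : G,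
    z = MonoidAlgebra.single (t.1 * g) 1 - ((ι t : Tˣ) : T) • MonoidAlgebra.single g 1}

/-- The metagroup algebra `A = T[G]`: the quotient of the free `T`-module on
`G`, equipped with the `T`-bilinear multiplication induced by the
multiplication of `G`, by the two-sided ideal generated by the elements
`(t*g) - ι(t)•g` for `t ∈ F` and `g ∈ G`. -/
noncomputable def MetagroupAlgebra :=
  (TwoSidedIdeal.span (relatorSet T ι)).ringCon.Quotient

noncomputable instance : NonUnitalNonAssocRing (MetagroupAlgebra T ι) :=
  inferInstanceAs
    (NonUnitalNonAssocRing ((TwoSidedIdeal.span (relatorSet T ι)).ringCon.Quotient))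

noncomputable instance : Module T (MetagroupAlgebra T ι) where
  __ := (inferInstance :
    DistribMulAction T ((TwoSidedIdeal.span (relatorSet T ι)).ringCon.Quotient))
  add_smul r s x := Quotient.inductionOn' x fun a =>
    congrArg (TwoSidedIdeal.span (relatorSet T ι)).ringCon.toQuotient (add_smul r s a)
  zero_smul x := Quotient.inductionOn' x fun a =>
    congrArg (TwoSidedIdeal.span (relatorSet T ι)).ringCon.toQuotient (zero_smul T a)

/-- `[g]`, the image in `T[G]` of the basis element `g ∈ G`. -/
noncomputable def MetagroupAlgebra.of (g : G) : MetagroupAlgebra T ι :=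
  (TwoSidedIdeal.span (relatorSet T ι)).ringCon.toQuotient (MonoidAlgebra.single g 1)

/-- The `1`-cochain `h : G → A`, `h(g) = c(g)•[g]`, associated with a function
`c : G → T`. -/
noncomputable def cochainH (c : G → T) (g : G) : MetagroupAlgebra T ι :=
  c g • MetagroupAlgebra.of T ι g

/-- The coboundary `f = δh : G × G → A`,
`f(x,y) = [x]*h(y) - h(x*y) + h(x)*[y]`. -/
noncomputable def coboundaryF (c : G → T) (x y : G) : MetagroupAlgebra T ι :=
  MetagroupAlgebra.of T ι x * cochainH T ι c y - cochainH T ι c (x * y)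
    + cochainH T ι c x * MetagroupAlgebra.of T ι y

namespace MetagroupAlgebra

noncomputable instance : IsScalarTower T (MetagroupAlgebra T ι) (MetagroupAlgebra T ι) :=
  inferInstanceAs (IsScalarTower T
    ((TwoSidedIdeal.span (relatorSet T ι)).ringCon.Quotient)
    ((TwoSidedIdeal.span (relatorSet T ι)).ringCon.Quotient))

noncomputable instance : SMulCommClass T (MetagroupAlgebra T ι) (MetagroupAlgebra T ι) :=
  inferInstanceAs (SMulCommClass T
    ((TwoSidedIdeal.span (relatorSet T ι)).ringCon.Quotient)
    ((TwoSidedIdeal.span (relatorSet T ι)).ringCon.Quotient))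

lemma of_mul_of (x y : G) : of T ι x * of T ι y = of T ι (x * y) := by
  show (TwoSidedIdeal.span (relatorSet T ι)).ringCon.toQuotient
      (MonoidAlgebra.single x 1 * MonoidAlgebra.single y 1) = _
  rw [MonoidAlgebra.single_mul_single, one_mul]
  rfl

lemma of_mem_F_mul (t : {g : G // g ∈ Metagroup.F (G := G)}) (g : G) :
    of T ι (t.1 * g) = ((ι t : Tˣ) : T) • of T ι g := by
  refine (RingCon.eq _).mpr ((TwoSidedIdeal.rel_iff _ _ _).mpr ?_)
  exact TwoSidedIdeal.subset_span ⟨t, g, rfl⟩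

lemma of_mul_mul (x y z : G) :
    of T ι ((x * y) * z)
      = ((ι ⟨Metagroup.t₃ x y z, Metagroup.t₃_mem_F x y z⟩ : Tˣ) : T) • of T ι (x * (y * z)) := by
  rw [Metagroup.t₃_spec x y z]
  exact of_mem_F_mul T ι ⟨_, Metagroup.t₃_mem_F x y z⟩ _

end MetagroupAlgebra

lemma cochainH_mul_mul {c : G → T} (hc : ∀ t ∈ Metagroup.F (G := G), ∀ g : G, c (t * g) = c g)
    (x y z : G) :
    cochainH T ι c ((x * y) * z)
      = ((ι ⟨Metagroup.t₃ x y z, Metagroup.t₃_mem_F x y z⟩ : Tˣ) : T) •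
          cochainH T ι c (x * (y * z)) := by
  rw [cochainH, cochainH, MetagroupAlgebra.of_mul_mul, Metagroup.t₃_spec x y z,
    hc _ (Metagroup.t₃_mem_F x y z), smul_comm]

theorem metagroup_algebra_coboundary_is_twisted_two_cocycle
    (c : G → T) (hc : ∀ t ∈ Metagroup.F (G := G), ∀ g : G, c (t * g) = c g)
    (x₁ x₂ x₃ : G) :
    ((ι ⟨Metagroup.t₃ x₁ x₂ x₃, Metagroup.t₃_mem_F x₁ x₂ x₃⟩ : Tˣ) : T) •
        (MetagroupAlgebra.of T ι x₁ * coboundaryF T ι c x₂ x₃)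
      - coboundaryF T ι c (x₁ * x₂) x₃
      + ((ι ⟨Metagroup.t₃ x₁ x₂ x₃, Metagroup.t₃_mem_F x₁ x₂ x₃⟩ : Tˣ) : T) •
          coboundaryF T ι c x₁ (x₂ * x₃)
      - coboundaryF T ι c x₁ x₂ * MetagroupAlgebra.of T ι x₃ = 0 := by
  -- every term is a multiple of `[x₁ * (x₂ * x₃)]` once the bracketings `(x₁ * x₂) * x₃` are
  -- traded for the factor `ι(t₃ x₁ x₂ x₃)`, after which the coefficients cancel
  simp only [coboundaryF, cochainH_mul_mul T ι hc]
  simp only [cochainH, smul_mul_assoc, mul_smul_comm,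
    mul_sub, mul_add, sub_mul, add_mul, MetagroupAlgebra.of_mul_of, MetagroupAlgebra.of_mul_mul]
  module
end
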